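/- arXiv:math-ph/0508048 — 4 statements merged into one kernel-verified Lean document; each statement's English description precedes it below -/
import Mathlib

section
/- Ibragimov–Linnik covariance inequality: let (Ω, F, P) be a probability space and A, B two sub-σ-algebras of F. Define the mixing coefficient φ(A,B) = sup{ |P(A∩B) − P(A)P(B)| / P(B) : A ∈ A, B ∈ B, P(B) > 0 }. Then for every real random variable X that is A-measurable and square-integrable and every real random variable Y that is B-measurable and square-integrable, |E[XY] − E[X]E[Y]| ≤ 2 φ(A,B)^{1/2} ‖X‖_{L²} ‖Y‖_{L²}. -/
/-!
Put `k = E[Y | 𝔄] - E[Y]`. Since `X` is `𝔄`-measurable, `Cov(X, Y) = E[X k]`, so by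
Cauchy–Schwarz it suffices to show `‖k‖₂ ≤ 2 √φ ‖Y‖₂`. If `Y` takes finitely many values `c`,
then `k = ∑ c f_c` with `f_c = P(Y = c | 𝔄) - P(Y = c)`. The sets `{f_c ≥ 0}` and `{f_c ≤ 0}`
lie in `𝔄`, so the mixing hypothesis gives `E|f_c| ≤ 2 φ P(Y = c)`, while `∑ |f_c| ≤ 2` because
both the conditional and the unconditional probabilities of the partition `{Y = c}` sum to one.
The weighted Cauchy–Schwarz inequality `k² ≤ (∑ |f_c|) (∑ c² |f_c|)` then gives
`E k² ≤ 4 φ E Y²`. A general `𝔅`-measurable `Y` is approximated in `L²` by finitely-valued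
`𝔅`-measurable functions.
-/

open MeasureTheory ProbabilityTheory Filter Topology
open scoped InnerProductSpace ENNReal

lemma Finset.sq_sum_mul_le_sum_abs_mul_sum_sq_mul_abs {ι : Type*} (s : Finset ι) (c w : ι → ℝ) :
    (∑ i ∈ s, c i * w i) ^ 2 ≤ (∑ i ∈ s, |w i|) * ∑ i ∈ s, c i ^ 2 * |w i| :=
  s.sum_sq_le_sum_mul_sum_of_sq_le_mul (fun i _ ↦ abs_nonneg _) (fun i _ ↦ by positivity)
    fun i _ ↦ le_of_eq (by rw [mul_pow, ← sq_abs (w i)]; ring)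

lemma sum_mul_indicator_preimage_singleton {α β : Type*} {Z : α → β} {t : Finset β}
    (hZt : ∀ x, Z x ∈ t) (h : β → ℝ) (x : α) :
    ∑ c ∈ t, h c * (Z ⁻¹' {c}).indicator 1 x = h (Z x) := by
  classical
  simp [Set.indicator_apply, eq_comm, hZt]

lemma exists_forall_mem_finset_eLpNorm_sub_lt {Ω : Type*} {mΩ : MeasurableSpace Ω}
    {μ : Measure Ω} {m : MeasurableSpace Ω} (hm : m ≤ mΩ) {Y : Ω → ℝ} (hY : Measurable Y)
    (hY2 : MemLp Y 2 μ) {ε : ℝ≥0∞} (hε : ε ≠ 0) :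
    ∃ Z : Ω → ℝ, Measurable Z ∧ (∃ t : Finset ℝ, ∀ ω, Z ω ∈ t) ∧ eLpNorm (Y - Z) 2 μ < ε := by
  have hY_sm : StronglyMeasurable Y := hY.stronglyMeasurable
  have hY2_trim : MemLp Y 2 (μ.trim hm) :=
    ⟨hY_sm.aestronglyMeasurable, by rw [eLpNorm_trim hm hY_sm]; exact hY2.2⟩
  obtain ⟨g, hg, -⟩ := hY2_trim.exists_simpleFunc_eLpNorm_sub_lt ENNReal.ofNat_ne_top hε
  refine ⟨g, g.measurable, ⟨g.range, g.mem_range_self⟩, ?_⟩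
  rwa [← eLpNorm_trim hm (hY_sm.sub g.stronglyMeasurable)]

section

variable {Ω : Type*} {m m₁ m₂ mΩ : MeasurableSpace Ω} {μ : Measure Ω}

lemma abs_integral_mul_le_toReal_eLpNorm_mul {f g : Ω → ℝ} (hf : MemLp f 2 μ)
    (hg : MemLp g 2 μ) :
    |∫ ω, f ω * g ω ∂μ| ≤ (eLpNorm f 2 μ).toReal * (eLpNorm g 2 μ).toReal := by
  have h_inner : ⟪hf.toLp f, hg.toLp g⟫_ℝ = ∫ ω, f ω * g ω ∂μ := by
    rw [L2.inner_def]
    refine integral_congr_ae ?_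
    filter_upwards [hf.coeFn_toLp, hg.coeFn_toLp] with ω hfω hgω
    simp [hfω, hgω, mul_comm]
  rw [← h_inner, ← Lp.norm_toLp f hf, ← Lp.norm_toLp g hg]
  exact abs_real_inner_le_norm _ _

lemma toReal_eLpNorm_two_sq {f : Ω → ℝ} (hf : MemLp f 2 μ) :
    (eLpNorm f 2 μ).toReal ^ 2 = ∫ ω, f ω ^ 2 ∂μ := by
  rw [← Lp.norm_toLp f hf, ← real_inner_self_eq_norm_sq, L2.inner_def]
  refine integral_congr_ae ?_
  filter_upwards [hf.coeFn_toLp] with ω hfω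
  simp [hfω, sq]

lemma abs_integral_le_toReal_eLpNorm_two [IsProbabilityMeasure μ] {f : Ω → ℝ}
    (hf : MemLp f 2 μ) : |∫ ω, f ω ∂μ| ≤ (eLpNorm f 2 μ).toReal := by
  have h_one : (eLpNorm (fun _ ↦ (1 : ℝ)) 2 μ).toReal = 1 := by
    simp [eLpNorm_const (1 : ℝ) two_ne_zero (IsProbabilityMeasure.ne_zero μ)]
  simpa [h_one] using abs_integral_mul_le_toReal_eLpNorm_mul hf (memLp_const (1 : ℝ))

lemma abs_covariance_le_two_mul [IsProbabilityMeasure μ] {X Y : Ω → ℝ} (hX : MemLp X 2 μ)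
    (hY : MemLp Y 2 μ) :
    |cov[X, Y; μ]| ≤ 2 * (eLpNorm X 2 μ).toReal * (eLpNorm Y 2 μ).toReal := by
  have h_mean : |μ[X] * μ[Y]| ≤ (eLpNorm X 2 μ).toReal * (eLpNorm Y 2 μ).toReal := by
    rw [abs_mul]
    exact mul_le_mul (abs_integral_le_toReal_eLpNorm_two hX)
      (abs_integral_le_toReal_eLpNorm_two hY) (abs_nonneg _) ENNReal.toReal_nonneg
  rw [covariance_eq_sub hX hY]
  calc |μ[X * Y] - μ[X] * μ[Y]| ≤ |μ[X * Y]| + |μ[X] * μ[Y]| := abs_sub _ _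
    _ ≤ (eLpNorm X 2 μ).toReal * (eLpNorm Y 2 μ).toReal
          + (eLpNorm X 2 μ).toReal * (eLpNorm Y 2 μ).toReal :=
      add_le_add (abs_integral_mul_le_toReal_eLpNorm_mul hX hY) h_mean
    _ = 2 * (eLpNorm X 2 μ).toReal * (eLpNorm Y 2 μ).toReal := by ring

lemma covariance_eq_integral_mul_condExp_sub [IsProbabilityMeasure μ]
    (hm : m ≤ mΩ) {X Y : Ω → ℝ} (hX : StronglyMeasurable[m] X) (hX2 : MemLp X 2 μ)
    (hY2 : MemLp Y 2 μ) :
    cov[X, Y; μ] = ∫ ω, X ω * (μ[Y | m] ω - μ[Y]) ∂μ := by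
  have h_pull : (fun ω ↦ X ω * μ[Y | m] ω) =ᵐ[μ] μ[X * Y | m] :=
    (condExp_mul_of_stronglyMeasurable_left hX (hX2.integrable_mul hY2)
      (hY2.integrable one_le_two)).symm
  have h_int : Integrable (fun ω ↦ X ω * μ[Y | m] ω) μ := integrable_condExp.congr h_pull.symm
  simp_rw [mul_sub]
  rw [integral_sub h_int ((hX2.integrable one_le_two).mul_const _), integral_mul_const,
    integral_congr_ae h_pull, integral_condExp hm, covariance_eq_sub hX2 hY2]

lemma integrable_indicator_one [IsFiniteMeasure μ] {s : Set Ω} (hs : MeasurableSet s) :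
    Integrable (s.indicator (1 : Ω → ℝ)) μ :=
  (integrable_const 1).indicator hs

lemma integral_comp_eq_sum_mul_measureReal [IsFiniteMeasure μ] {β : Type*} [MeasurableSpace β]
    [MeasurableSingletonClass β] {Z : Ω → β} (hZ : Measurable Z) {t : Finset β}
    (hZt : ∀ ω, Z ω ∈ t) (h : β → ℝ) :
    ∫ ω, h (Z ω) ∂μ = ∑ c ∈ t, h c * μ.real (Z ⁻¹' {c}) := by
  simp_rw [← sum_mul_indicator_preimage_singleton hZt h]
  rw [integral_finsetSum _ fun c _ ↦
    (integrable_indicator_one (hZ (measurableSet_singleton c))).const_mul _]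
  simp [integral_const_mul, integral_indicator_one (hZ (measurableSet_singleton _))]

lemma memLp_of_forall_mem_finset [IsFiniteMeasure μ] {Z : Ω → ℝ} (hZ : AEStronglyMeasurable Z μ)
    {t : Finset ℝ} (hZt : ∀ ω, Z ω ∈ t) (p : ℝ≥0∞) : MemLp Z p μ :=
  .of_bound hZ (∑ c ∈ t, |c|) <| ae_of_all _ fun ω ↦
    Finset.single_le_sum (f := fun c ↦ |c|) (fun c _ ↦ abs_nonneg c) (hZt ω)

lemma setIntegral_condExp_indicator_sub [IsFiniteMeasure μ]
    (hm : m ≤ mΩ) {A B : Set Ω} (hA : MeasurableSet[m] A) (hB : MeasurableSet B) :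
    ∫ ω in A, (μ[B.indicator 1 | m] ω - μ.real B) ∂μ = μ.real (A ∩ B) - μ.real A * μ.real B := by
  rw [integral_sub integrable_condExp.integrableOn (integrable_const _),
    setIntegral_condExp hm (integrable_indicator_one hB) hA, setIntegral_indicator hB]
  simp [mul_comm]

lemma ae_sum_abs_condExp_indicator_sub_le_two [IsProbabilityMeasure μ] (hm : m ≤ mΩ)
    {ι : Type*} {s : Finset ι} {B : ι → Set Ω} (hB : ∀ i, MeasurableSet (B i))
    (h_part : ∀ ω, ∑ i ∈ s, (B i).indicator (1 : Ω → ℝ) ω = 1) :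
    ∀ᵐ ω ∂μ, ∑ i ∈ s, |μ[(B i).indicator (1 : Ω → ℝ) | m] ω - μ.real (B i)| ≤ 2 := by
  have h_part' : ∑ i ∈ s, (B i).indicator (1 : Ω → ℝ) = fun _ ↦ 1 := by
    ext ω
    simp [Finset.sum_apply, h_part]
  have h_condExp_sum : ∀ᵐ ω ∂μ, ∑ i ∈ s, μ[(B i).indicator (1 : Ω → ℝ) | m] ω = 1 := by
    filter_upwards [condExp_finsetSum (fun i _ ↦ integrable_indicator_one (hB i)) m]
      with ω hω
    rw [← Finset.sum_apply, ← hω, h_part', condExp_const hm]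
  have h_measure_sum : ∑ i ∈ s, μ.real (B i) = 1 := by
    have := congrArg (fun f ↦ ∫ ω, f ω ∂μ) h_part'
    simpa [integral_finsetSum _ fun i _ ↦ integrable_indicator_one (hB i),
      integral_indicator_one (hB _)] using this
  have h_nonneg : ∀ᵐ ω ∂μ, ∀ i ∈ s, 0 ≤ μ[(B i).indicator (1 : Ω → ℝ) | m] ω := by
    rw [Filter.eventually_all_finset]
    exact fun i _ ↦ condExp_nonneg (ae_of_all _ (Set.indicator_nonneg fun _ _ ↦ zero_le_one))
  filter_upwards [h_condExp_sum, h_nonneg] with ω h_sum h_nn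
  calc ∑ i ∈ s, |μ[(B i).indicator 1 | m] ω - μ.real (B i)|
      ≤ ∑ i ∈ s, (μ[(B i).indicator 1 | m] ω + μ.real (B i)) := by
        refine Finset.sum_le_sum fun i hi ↦ (abs_sub _ _).trans_eq ?_
        rw [abs_of_nonneg (h_nn i hi), abs_of_nonneg measureReal_nonneg]
    _ = 2 := by rw [Finset.sum_add_distrib, h_sum, h_measure_sum]; norm_num

lemma condExp_sub_integral_ae_eq_sum [IsFiniteMeasure μ] {Z : Ω → ℝ} (hZ : Measurable Z)
    {t : Finset ℝ} (hZt : ∀ ω, Z ω ∈ t) :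
    (fun ω ↦ μ[Z | m] ω - μ[Z]) =ᵐ[μ]
      fun ω ↦ ∑ c ∈ t, c * (μ[(Z ⁻¹' {c}).indicator (1 : Ω → ℝ) | m] ω - μ.real (Z ⁻¹' {c})) := by
  have h_int : ∀ c ∈ t, Integrable (c • (Z ⁻¹' {c}).indicator (1 : Ω → ℝ)) μ :=
    fun c _ ↦ (integrable_indicator_one (hZ (measurableSet_singleton c))).smul c
  have h_Z : Z = ∑ c ∈ t, c • (Z ⁻¹' {c}).indicator 1 := by
    ext ω
    simpa using (sum_mul_indicator_preimage_singleton hZt id ω).symm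
  have h_mean : μ[Z] = ∑ c ∈ t, c * μ.real (Z ⁻¹' {c}) :=
    integral_comp_eq_sum_mul_measureReal hZ hZt id
  filter_upwards [condExp_finsetSum h_int m,
    (Filter.eventually_all_finset t).2 fun c _ ↦ condExp_smul (μ := μ) c
      ((Z ⁻¹' {c}).indicator (1 : Ω → ℝ)) m] with ω h_sum h_smul
  rw [h_mean]
  nth_rw 1 [h_Z]
  rw [h_sum, Finset.sum_apply, Finset.sum_congr rfl h_smul]
  simp [mul_sub, Finset.sum_sub_distrib]

def PhiMixingBound (μ : Measure Ω) (m₁ m₂ : MeasurableSpace Ω) (φ : ℝ) : Prop :=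
  ∀ ⦃A B : Set Ω⦄, MeasurableSet[m₁] A → MeasurableSet[m₂] B → 0 < μ.real B →
    |μ.real (A ∩ B) - μ.real A * μ.real B| ≤ φ * μ.real B

namespace PhiMixingBound

variable {φ : ℝ}

lemma nonneg [IsProbabilityMeasure μ] (h : PhiMixingBound μ m₁ m₂ φ) : 0 ≤ φ := by
  simpa using h (@MeasurableSet.empty _ m₁) (@MeasurableSet.univ _ m₂) (by simp)

lemma abs_measureReal_inter_sub_le [IsFiniteMeasure μ] (h : PhiMixingBound μ m₁ m₂ φ)
    {A B : Set Ω} (hA : MeasurableSet[m₁] A) (hB : MeasurableSet[m₂] B) :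
    |μ.real (A ∩ B) - μ.real A * μ.real B| ≤ φ * μ.real B := by
  rcases measureReal_nonneg.eq_or_lt with hB0 | hB0
  · have hAB : μ.real (A ∩ B) = 0 := measureReal_mono_null Set.inter_subset_right hB0.symm
    simp [← hB0, hAB]
  · exact h hA hB hB0

lemma integral_abs_condExp_indicator_sub_le [IsFiniteMeasure μ] (h : PhiMixingBound μ m₁ m₂ φ)
    (hm₁ : m₁ ≤ mΩ) (hm₂ : m₂ ≤ mΩ) {B : Set Ω} (hB : MeasurableSet[m₂] B) :
    ∫ ω, |μ[B.indicator 1 | m₁] ω - μ.real B| ∂μ ≤ 2 * φ * μ.real B := by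
  set f := fun ω ↦ μ[B.indicator (1 : Ω → ℝ) | m₁] ω - μ.real B
  have hf : Measurable[m₁] f := (stronglyMeasurable_condExp.sub stronglyMeasurable_const).measurable
  have h_pos : MeasurableSet[m₁] {ω | 0 ≤ f ω} := measurableSet_le measurable_const hf
  have h_neg : MeasurableSet[m₁] {ω | f ω ≤ 0} := measurableSet_le hf measurable_const
  have hf_int : Integrable f μ := integrable_condExp.sub (integrable_const _)
  simp_rw [← Real.norm_eq_abs]
  change ∫ ω, ‖f ω‖ ∂μ ≤ _
  rw [integral_norm_eq_pos_sub_neg hf_int,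
    setIntegral_condExp_indicator_sub hm₁ h_pos (hm₂ _ hB),
    setIntegral_condExp_indicator_sub hm₁ h_neg (hm₂ _ hB)]
  linarith [le_of_abs_le (h.abs_measureReal_inter_sub_le h_pos hB),
    neg_le_of_abs_le (h.abs_measureReal_inter_sub_le h_neg hB)]

lemma integral_sq_condExp_sub_le [IsProbabilityMeasure μ] (h : PhiMixingBound μ m₁ m₂ φ)
    (hm₁ : m₁ ≤ mΩ) (hm₂ : m₂ ≤ mΩ) {Z : Ω → ℝ} (hZ : Measurable[m₂] Z) {t : Finset ℝ}
    (hZt : ∀ ω, Z ω ∈ t) :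
    ∫ ω, (μ[Z | m₁] ω - μ[Z]) ^ 2 ∂μ ≤ 4 * φ * ∫ ω, Z ω ^ 2 ∂μ := by
  set B : ℝ → Set Ω := fun c ↦ Z ⁻¹' {c}
  set f : ℝ → Ω → ℝ := fun c ω ↦ μ[(B c).indicator 1 | m₁] ω - μ.real (B c)
  have hB : ∀ c, MeasurableSet[m₂] (B c) := fun c ↦ hZ (measurableSet_singleton c)
  have hZ' : Measurable Z := hZ.mono hm₂ le_rfl
  have hf_int : ∀ c, Integrable (f c) μ := fun c ↦ integrable_condExp.sub (integrable_const _)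
  have h_abs_sum : ∀ᵐ ω ∂μ, ∑ c ∈ t, |f c ω| ≤ 2 :=
    ae_sum_abs_condExp_indicator_sub_le_two hm₁ (fun c ↦ hm₂ _ (hB c))
      fun ω ↦ by simpa using sum_mul_indicator_preimage_singleton hZt (fun _ ↦ 1) ω
  have h_sq_le : ∀ᵐ ω ∂μ, (μ[Z | m₁] ω - μ[Z]) ^ 2 ≤ 2 * ∑ c ∈ t, c ^ 2 * |f c ω| := by
    filter_upwards [condExp_sub_integral_ae_eq_sum hZ' hZt, h_abs_sum] with ω h_eq h_le
    rw [h_eq]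
    exact (t.sq_sum_mul_le_sum_abs_mul_sum_sq_mul_abs _ _).trans
      (mul_le_mul_of_nonneg_right h_le (by positivity))
  calc ∫ ω, (μ[Z | m₁] ω - μ[Z]) ^ 2 ∂μ
      ≤ ∫ ω, 2 * ∑ c ∈ t, c ^ 2 * |f c ω| ∂μ := by
        refine integral_mono_ae ?_ ?_ h_sq_le
        · exact (((memLp_of_forall_mem_finset hZ'.aestronglyMeasurable hZt 2).condExp
            one_le_two).sub (memLp_const _)).integrable_sq
        · exact (integrable_finsetSum _ fun c _ ↦ (hf_int c).abs.const_mul _).const_mul _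
    _ = 2 * ∑ c ∈ t, c ^ 2 * ∫ ω, |f c ω| ∂μ := by
        rw [integral_const_mul, integral_finsetSum _ fun c _ ↦ (hf_int c).abs.const_mul _]
        simp_rw [integral_const_mul]
    _ ≤ 2 * ∑ c ∈ t, c ^ 2 * (2 * φ * μ.real (B c)) := by
        gcongr with c
        exact h.integral_abs_condExp_indicator_sub_le hm₁ hm₂ (hB c)
    _ = 4 * φ * ∫ ω, Z ω ^ 2 ∂μ := by
        rw [integral_comp_eq_sum_mul_measureReal hZ' hZt (· ^ 2), Finset.mul_sum, Finset.mul_sum]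
        exact Finset.sum_congr rfl fun c _ ↦ by ring

lemma abs_covariance_le_of_forall_mem [IsProbabilityMeasure μ] (h : PhiMixingBound μ m₁ m₂ φ)
    (hm₁ : m₁ ≤ mΩ) (hm₂ : m₂ ≤ mΩ) {X Z : Ω → ℝ} (hX : StronglyMeasurable[m₁] X)
    (hX2 : MemLp X 2 μ) (hZ : Measurable[m₂] Z) {t : Finset ℝ} (hZt : ∀ ω, Z ω ∈ t) :
    |cov[X, Z; μ]| ≤ 2 * √φ * (eLpNorm X 2 μ).toReal * (eLpNorm Z 2 μ).toReal := by
  have hZ2 : MemLp Z 2 μ :=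
    memLp_of_forall_mem_finset (hZ.mono hm₂ le_rfl).aestronglyMeasurable hZt 2
  have hk : MemLp (fun ω ↦ μ[Z | m₁] ω - μ[Z]) 2 μ := (hZ2.condExp one_le_two).sub (memLp_const _)
  have hk_le : (eLpNorm (fun ω ↦ μ[Z | m₁] ω - μ[Z]) 2 μ).toReal ≤
      2 * √φ * (eLpNorm Z 2 μ).toReal := by
    rw [← pow_le_pow_iff_left₀ ENNReal.toReal_nonneg (by positivity) two_ne_zero, mul_pow, mul_pow,
      Real.sq_sqrt h.nonneg, toReal_eLpNorm_two_sq hk, toReal_eLpNorm_two_sq hZ2]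
    linarith [h.integral_sq_condExp_sub_le hm₁ hm₂ hZ hZt]
  rw [covariance_eq_integral_mul_condExp_sub hm₁ hX hX2 hZ2]
  calc _ ≤ (eLpNorm X 2 μ).toReal * (eLpNorm (fun ω ↦ μ[Z | m₁] ω - μ[Z]) 2 μ).toReal :=
        abs_integral_mul_le_toReal_eLpNorm_mul hX2 hk
    _ ≤ (eLpNorm X 2 μ).toReal * (2 * √φ * (eLpNorm Z 2 μ).toReal) := by gcongr
    _ = 2 * √φ * (eLpNorm X 2 μ).toReal * (eLpNorm Z 2 μ).toReal := by ring

lemma abs_covariance_le [IsProbabilityMeasure μ] (h : PhiMixingBound μ m₁ m₂ φ)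
    (hm₁ : m₁ ≤ mΩ) (hm₂ : m₂ ≤ mΩ) {X Y : Ω → ℝ} (hX : StronglyMeasurable[m₁] X)
    (hX2 : MemLp X 2 μ) (hY : Measurable[m₂] Y) (hY2 : MemLp Y 2 μ) :
    |cov[X, Y; μ]| ≤ 2 * √φ * (eLpNorm X 2 μ).toReal * (eLpNorm Y 2 μ).toReal := by
  set nX := (eLpNorm X 2 μ).toReal
  set nY := (eLpNorm Y 2 μ).toReal
  have h_approx : ∀ ε > 0, |cov[X, Y; μ]| ≤ 2 * √φ * nX * nY + (2 * √φ + 2) * nX * ε := by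
    intro ε hε
    obtain ⟨Z, hZ, ⟨t, hZt⟩, hYZ⟩ :=
      exists_forall_mem_finset_eLpNorm_sub_lt hm₂ hY hY2 (ENNReal.ofReal_pos.2 hε).ne'
    have hZ2 : MemLp Z 2 μ :=
      memLp_of_forall_mem_finset (hZ.mono hm₂ le_rfl).aestronglyMeasurable hZt 2
    have h_YZ : (eLpNorm (Y - Z) 2 μ).toReal ≤ ε := ENNReal.toReal_le_of_le_ofReal hε.le hYZ.le
    have h_Z : (eLpNorm Z 2 μ).toReal ≤ nY + ε := by
      have h_tri := eLpNorm_sub_le hY2.1 (hY2.sub hZ2).1 one_le_two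
      rw [sub_sub_cancel] at h_tri
      linarith [ENNReal.toReal_le_add h_tri hY2.2.ne (hY2.sub hZ2).2.ne]
    have h_split : cov[X, Y; μ] = cov[X, Z; μ] + cov[X, Y - Z; μ] := by
      rw [covariance_sub_right hX2 hY2 hZ2]
      ring
    calc |cov[X, Y; μ]| ≤ |cov[X, Z; μ]| + |cov[X, Y - Z; μ]| := h_split ▸ abs_add_le _ _
      _ ≤ 2 * √φ * nX * (eLpNorm Z 2 μ).toReal + 2 * nX * (eLpNorm (Y - Z) 2 μ).toReal :=
        add_le_add (h.abs_covariance_le_of_forall_mem hm₁ hm₂ hX hX2 hZ hZt)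
          (abs_covariance_le_two_mul hX2 (hY2.sub hZ2))
      _ ≤ 2 * √φ * nX * (nY + ε) + 2 * nX * ε := by gcongr
      _ = 2 * √φ * nX * nY + (2 * √φ + 2) * nX * ε := by ring
  have h_lim : Tendsto (fun ε ↦ 2 * √φ * nX * nY + (2 * √φ + 2) * nX * ε) (𝓝[>] 0)
      (𝓝 (2 * √φ * nX * nY)) :=
    tendsto_nhdsWithin_of_tendsto_nhds <| (by fun_prop : Continuous fun ε : ℝ ↦
      2 * √φ * nX * nY + (2 * √φ + 2) * nX * ε).tendsto' 0 _ (by simp)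
  exact ge_of_tendsto h_lim (eventually_nhdsWithin_of_forall h_approx)

end PhiMixingBound

end

/-- Ibragimov–Linnik covariance inequality: if `φ` bounds the mixing ratios
`|P(A∩B) − P(A)P(B)| / P(B)` over all `A ∈ 𝔄`, `B ∈ 𝔅` with `P(B) > 0` (i.e. `φ` is an upper
bound for the mixing coefficient `φ(𝔄,𝔅)`), then for all square-integrable real random
variables `X` (`𝔄`-measurable) and `Y` (`𝔅`-measurable),
`|E[XY] − E[X]E[Y]| ≤ 2 φ^{1/2} ‖X‖_{L²} ‖Y‖_{L²}`. -/
theorem ibragimov_linnik_covariance_inequality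
    {Ω : Type*} [F : MeasurableSpace Ω] (P : Measure Ω) [IsProbabilityMeasure P]
    (𝔄 𝔅 : MeasurableSpace Ω) (h𝔄 : 𝔄 ≤ F) (h𝔅 : 𝔅 ≤ F)
    (φ : ℝ)
    (hφ : ∀ A B : Set Ω, MeasurableSet[𝔄] A → MeasurableSet[𝔅] B → 0 < (P B).toReal →
      |(P (A ∩ B)).toReal - (P A).toReal * (P B).toReal| ≤ φ * (P B).toReal)
    (X Y : Ω → ℝ) (hX : Measurable[𝔄] X) (hY : Measurable[𝔅] Y)
    (hX2 : MemLp X 2 P) (hY2 : MemLp Y 2 P) :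
    |(∫ ω, X ω * Y ω ∂P) - (∫ ω, X ω ∂P) * (∫ ω, Y ω ∂P)| ≤
      2 * Real.sqrt φ * (eLpNorm X 2 P).toReal * (eLpNorm Y 2 P).toReal := by
  have h_mixing : PhiMixingBound P 𝔄 𝔅 φ := fun A B hA hB ↦ hφ A B hA hB
  have h_cov := h_mixing.abs_covariance_le h𝔄 h𝔅 hX.stronglyMeasurable hX2 hY hY2
  rwa [covariance_eq_sub hX2 hY2] at h_cov
end

section
/- Riemann–Lebesgue-type decay for Klein–Gordon oscillations: let m > 0, ω(k) = √(|k|² + m²), and let g ∈ L¹(ℝ³, ℂ). Then for every fixed z ∈ ℝ³, ∫_{ℝ³} e^{−ik·z} cos(2ω(k)t) g(k) dk → 0 and ∫_{ℝ³} e^{−ik·z} (sin(2ω(k)t)/ω(k)) g(k) dk → 0 as t → ∞. -/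
/-!
Writing `cos` and `sin` through exponentials (for the sine term with the integrable function
`e^{-ik·z} g / ω`, using `ω ≥ m > 0`), it suffices that `∫ e^{itω(k)} f(k) dk → 0` as `|t| → ∞`
for every `f ∈ L¹(ℝ³)`. Writing `k = (x, y) ∈ ℝ × ℝ²` gives `ω(k) = √(x² + |y|² + m²)`, so by
Fubini and dominated convergence it is enough to show, for each `c ≥ 0` and `h ∈ L¹(ℝ)`, that
`∫ e^{it√(x² + c)} h(x) dx → 0`. On each half-line `x ↦ √(x² + c)` is a diffeomorphism onto its
image, and the substitution `u = √(x² + c)` turns the integral into the Fourier transform of an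
`L¹` function, which tends to `0` by the Riemann–Lebesgue lemma.
-/

open Complex Filter
open scoped RealInnerProductSpace

/-- `ω(k) = √(|k|² + m²)`. -/
noncomputable def omegaKG (m : ℝ) (k : EuclideanSpace ℝ (Fin 3)) : ℝ :=
  Real.sqrt (‖k‖ ^ 2 + m ^ 2)

open MeasureTheory Set
open scoped Topology

theorem MeasureTheory.Integrable.exp_ofReal_mul_I_mul {α : Type*} [MeasurableSpace α]
    {μ : Measure α} {ψ : α → ℝ} (hψ : Measurable ψ) {f : α → ℂ} (hf : Integrable f μ) :
    Integrable (fun x => exp (↑(ψ x) * I) * f x) μ :=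
  hf.bdd_mul (c := 1) (by fun_prop) (ae_of_all _ fun x => (norm_exp_ofReal_mul_I _).le)

theorem tendsto_integral_exp_mul_I_cocompact (H : ℝ → ℂ) :
    Tendsto (fun t : ℝ => ∫ u, exp (↑(t * u) * I) * H u) (cocompact ℝ) (𝓝 0) := by
  have hπ : (-(2 * Real.pi))⁻¹ ≠ 0 := by simp [Real.pi_ne_zero]
  refine ((Real.tendsto_integral_exp_smul_cocompact H).comp
    (tendsto_cocompact_mul_left₀ hπ)).congr fun t => ?_
  simp only [Function.comp_apply, Circle.smul_def, Real.fourierChar_apply, smul_eq_mul]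
  congr with u
  field_simp

theorem tendsto_setIntegral_exp_comp_mul_I {s : Set ℝ} (hs : MeasurableSet s) {φ φ' : ℝ → ℝ}
    (hφ : ∀ x ∈ s, HasDerivWithinAt φ (φ' x) s x) (hφ' : ∀ x ∈ s, φ' x ≠ 0) (hinj : InjOn φ s)
    (h : ℝ → ℂ) :
    Tendsto (fun t : ℝ => ∫ x in s, exp (↑(t * φ x) * I) * h x) (cocompact ℝ) (𝓝 0) := by
  -- No integrability is needed: the change of variables below and the Riemann–Lebesgue lemma
  -- hold for all functions, non-integrable ones giving the junk value `0` on both sides.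
  obtain ⟨H, hH⟩ : ∃ H : ℝ → ℂ, ∀ x ∈ s, |φ' x| • H (φ x) = h x :=
    ⟨fun u => (|φ' (Function.invFunOn φ s u)|⁻¹ : ℝ) • h (Function.invFunOn φ s u), fun x hx => by
      simp only [hinj.leftInvOn_invFunOn hx, smul_smul,
        mul_inv_cancel₀ (abs_ne_zero.2 (hφ' x hx)), one_smul]⟩
  refine (tendsto_integral_exp_mul_I_cocompact ((φ '' s).indicator H)).congr fun t => ?_
  have himage : MeasurableSet (φ '' s) :=
    measurable_image_of_fderivWithin hs (fun x hx => (hφ x hx).hasFDerivWithinAt) hinj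
  calc ∫ u, exp (↑(t * u) * I) * (φ '' s).indicator H u
      = ∫ u in φ '' s, exp (↑(t * u) * I) * H u := by
        rw [← integral_indicator himage]
        congr with u
        by_cases hu : u ∈ φ '' s <;> simp [hu]
    _ = ∫ x in s, |φ' x| • (exp (↑(t * φ x) * I) * H (φ x)) :=
        integral_image_eq_integral_abs_deriv_smul hs hφ hinj _
    _ = ∫ x in s, exp (↑(t * φ x) * I) * h x :=
        setIntegral_congr_fun hs fun x hx => by rw [← mul_smul_comm, hH x hx]

theorem injOn_sqrt_sq_add {c : ℝ} (hc : 0 ≤ c) {s : Set ℝ} (hs : InjOn (|·|) s) :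
    InjOn (fun x => √(x ^ 2 + c)) s := fun x hx y hy hxy => by
  rw [Real.sqrt_inj (by positivity) (by positivity), add_left_inj, sq_eq_sq_iff_abs_eq_abs] at hxy
  exact hs hx hy hxy

theorem tendsto_integral_exp_sqrt_sq_add_mul_I {c : ℝ} (hc : 0 ≤ c) {h : ℝ → ℂ}
    (hh : Integrable h) :
    Tendsto (fun t : ℝ => ∫ x, exp (↑(t * √(x ^ 2 + c)) * I) * h x) (cocompact ℝ) (𝓝 0) := by
  have hhalfLine : ∀ s ⊆ ({0}ᶜ : Set ℝ), MeasurableSet s → InjOn (|·|) s →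
      Tendsto (fun t : ℝ => ∫ x in s, exp (↑(t * √(x ^ 2 + c)) * I) * h x)
        (cocompact ℝ) (𝓝 0) := by
    intro s hs0 hs hinj
    have hpos : ∀ x ∈ s, 0 < x ^ 2 + c := fun x hx => by
      have : x ≠ 0 := hs0 hx
      positivity
    refine tendsto_setIntegral_exp_comp_mul_I (φ' := fun x => x / √(x ^ 2 + c)) hs
      (fun x hx => ?_) (fun x hx => ?_) (injOn_sqrt_sq_add hc hinj) h
    · refine (((hasDerivAt_pow 2 x).add_const c).sqrt (hpos x hx).ne').hasDerivWithinAt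
        |>.congr_deriv ?_
      field_simp
      norm_num
    · have : x ≠ 0 := hs0 hx
      have := Real.sqrt_pos.2 (hpos x hx)
      positivity
  have hint (t : ℝ) : Integrable (fun x => exp (↑(t * √(x ^ 2 + c)) * I) * h x) :=
    hh.exp_ofReal_mul_I_mul (by fun_prop)
  have hIio := hhalfLine (Iio 0) (fun _ hx => ne_of_lt hx) measurableSet_Iio
    fun x hx y hy hxy => by simpa [abs_of_neg (mem_Iio.1 hx), abs_of_neg (mem_Iio.1 hy)] using hxy
  have hIoi := hhalfLine (Ioi 0) (fun _ hx => ne_of_gt hx) measurableSet_Ioi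
    fun x hx y hy hxy => by simpa [abs_of_pos (mem_Ioi.1 hx), abs_of_pos (mem_Ioi.1 hy)] using hxy
  refine (add_zero (0 : ℂ) ▸ hIio.add hIoi).congr fun t => ?_
  rw [← integral_Iic_eq_integral_Iio,
    intervalIntegral.integral_Iic_add_Ioi (hint t).integrableOn (hint t).integrableOn]

theorem tendsto_integral_prod_of_ae_tendsto_integral_fiber {α β ι E : Type*}
    [MeasurableSpace α] [MeasurableSpace β] {μ : Measure α} {ν : Measure β} [SFinite μ]
    [SFinite ν] [NormedAddCommGroup E] [NormedSpace ℝ E] {l : Filter ι} [l.IsCountablyGenerated]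
    {F : ι → α × β → E} {f : α × β → E} (hf : Integrable f (μ.prod ν))
    (hF_meas : ∀ i, AEStronglyMeasurable (F i) (μ.prod ν)) (hF_le : ∀ i p, ‖F i p‖ ≤ ‖f p‖)
    (hlim : ∀ᵐ y ∂ν, Tendsto (fun i => ∫ x, F i (x, y) ∂μ) l (𝓝 0)) :
    Tendsto (fun i => ∫ p, F i p ∂μ.prod ν) l (𝓝 0) := by
  have hF_int (i : ι) : Integrable (F i) (μ.prod ν) := hf.mono (hF_meas i) (ae_of_all _ (hF_le i))
  simp_rw [fun i => integral_prod_symm (F i) (hF_int i)]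
  rw [← integral_zero β E]
  exact tendsto_integral_filter_of_dominated_convergence (fun y => ∫ x, ‖f (x, y)‖ ∂μ)
    (.of_forall fun i => ((hF_meas i).comp_measurePreserving
      Measure.measurePreserving_swap).integral_prod_right')
    (.of_forall fun i => hf.prod_left_ae.mono fun y hy => (norm_integral_le_integral_norm _).trans
      (integral_mono_of_nonneg (ae_of_all _ fun _ => norm_nonneg _) hy.norm
        (ae_of_all _ fun x => hF_le i (x, y))))
    hf.integral_norm_prod_right hlim

theorem EuclideanSpace.norm_sq_eq_sq_zero_add_sum_succ {n : ℕ}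
    (k : EuclideanSpace ℝ (Fin (n + 1))) :
    ‖k‖ ^ 2 = k 0 ^ 2 + ∑ j : Fin n, k j.succ ^ 2 := by
  simp [EuclideanSpace.norm_sq_eq, Fin.sum_univ_succ]

instance Real.isCountablyGenerated_cocompact : (cocompact ℝ).IsCountablyGenerated := by
  rw [cocompact_eq_atBot_atTop]
  infer_instance

theorem tendsto_integral_exp_sqrt_norm_sq_add_mul_I {n : ℕ} {c : ℝ} (hc : 0 ≤ c)
    {f : EuclideanSpace ℝ (Fin (n + 1)) → ℂ} (hf : Integrable f) :
    Tendsto (fun t : ℝ => ∫ k, exp (↑(t * √(‖k‖ ^ 2 + c)) * I) * f k) (cocompact ℝ) (𝓝 0) := by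
  let e := (MeasurableEquiv.toLp 2 (Fin (n + 1) → ℝ)).symm.trans
    (MeasurableEquiv.piFinSuccAbove (fun _ => ℝ) 0)
  have he : MeasurePreserving e volume (volume.prod volume) :=
    (volume_preserving_piFinSuccAbove (fun _ => ℝ) 0).comp
      (EuclideanSpace.volume_preserving_symm_measurableEquiv_toLp _)
  let Φ : ℝ × (Fin n → ℝ) → ℝ := fun p => √(p.1 ^ 2 + (∑ j, p.2 j ^ 2 + c))
  have hΦ (k : EuclideanSpace ℝ (Fin (n + 1))) : √(‖k‖ ^ 2 + c) = Φ (e k) := by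
    rw [EuclideanSpace.norm_sq_eq_sq_zero_add_sum_succ, add_assoc]
    rfl
  have hfe : Integrable (f ∘ e.symm) (volume.prod volume) :=
    (he.symm.integrable_comp_emb e.symm.measurableEmbedding).2 hf
  have hpull (t : ℝ) : ∫ k, exp (↑(t * √(‖k‖ ^ 2 + c)) * I) * f k
      = ∫ p, exp (↑(t * Φ p) * I) * (f ∘ e.symm) p ∂(volume.prod volume) := by
    rw [← he.integral_comp']
    simp only [Function.comp_apply, e.symm_apply_apply, hΦ]
  simp_rw [hpull]
  refine tendsto_integral_prod_of_ae_tendsto_integral_fiber hfe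
    (fun t => (hfe.exp_ofReal_mul_I_mul
      (by fun_prop : Measurable fun p => t * Φ p)).aestronglyMeasurable)
    (fun t p => by rw [norm_mul, norm_exp_ofReal_mul_I, one_mul]) ?_
  filter_upwards [hfe.prod_left_ae] with y hy
  have hc' : 0 ≤ ∑ j, y j ^ 2 + c := by positivity
  exact tendsto_integral_exp_sqrt_sq_add_mul_I hc' hy

section Trigonometric

variable {α : Type*} [MeasurableSpace α] {μ : Measure α} {φ : α → ℝ} {f : α → ℂ}

theorem integral_cos_mul_eq (hφ : Measurable φ) (hf : Integrable f μ) (t : ℝ) :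
    ∫ x, ↑(Real.cos (t * φ x)) * f x ∂μ =
      ((∫ x, exp (↑(t * φ x) * I) * f x ∂μ) + ∫ x, exp (↑(-t * φ x) * I) * f x ∂μ) / 2 := by
  rw [← integral_add (hf.exp_ofReal_mul_I_mul (by fun_prop))
    (hf.exp_ofReal_mul_I_mul (by fun_prop)), ← integral_div]
  congr with x
  rw [ofReal_cos, Complex.cos, neg_mul t, ofReal_neg]
  ring

theorem integral_sin_mul_eq (hφ : Measurable φ) (hf : Integrable f μ) (t : ℝ) :
    ∫ x, ↑(Real.sin (t * φ x)) * f x ∂μ =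
      ((∫ x, exp (↑(-t * φ x) * I) * f x ∂μ) - ∫ x, exp (↑(t * φ x) * I) * f x ∂μ) * I / 2 := by
  rw [← integral_sub (hf.exp_ofReal_mul_I_mul (by fun_prop))
    (hf.exp_ofReal_mul_I_mul (by fun_prop)), ← integral_mul_const, ← integral_div]
  congr with x
  rw [ofReal_sin, Complex.sin, neg_mul t, ofReal_neg]
  ring

variable (hφ : Measurable φ) (hf : Integrable f μ)
  (h : Tendsto (fun t : ℝ => ∫ x, exp (↑(t * φ x) * I) * f x ∂μ) (cocompact ℝ) (𝓝 0))
include hφ hf h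

theorem tendsto_integral_cos_mul_of_tendsto_integral_exp :
    Tendsto (fun t : ℝ => ∫ x, ↑(Real.cos (t * φ x)) * f x ∂μ) (cocompact ℝ) (𝓝 0) := by
  have hneg := h.comp (tendsto_cocompact_mul_left₀ (neg_ne_zero.2 one_ne_zero))
  simp only [Function.comp_def, neg_one_mul] at hneg
  have hlim := (h.add hneg).div_const 2
  rw [add_zero, zero_div] at hlim
  exact hlim.congr fun t => (integral_cos_mul_eq hφ hf t).symm

theorem tendsto_integral_sin_mul_of_tendsto_integral_exp :
    Tendsto (fun t : ℝ => ∫ x, ↑(Real.sin (t * φ x)) * f x ∂μ) (cocompact ℝ) (𝓝 0) := by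
  have hneg := h.comp (tendsto_cocompact_mul_left₀ (neg_ne_zero.2 one_ne_zero))
  simp only [Function.comp_def, neg_one_mul] at hneg
  have hlim := ((hneg.sub h).mul_const I).div_const 2
  rw [sub_zero, zero_mul, zero_div] at hlim
  exact hlim.congr fun t => (integral_sin_mul_eq hφ hf t).symm

end Trigonometric

theorem abs_le_omegaKG (m : ℝ) (k : EuclideanSpace ℝ (Fin 3)) : |m| ≤ omegaKG m k :=
  Real.abs_le_sqrt (le_add_of_nonneg_left (sq_nonneg _))

theorem measurable_omegaKG (m : ℝ) : Measurable (omegaKG m) := by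
  unfold omegaKG
  fun_prop

theorem MeasureTheory.Integrable.omegaKG_inv_mul {m : ℝ} (hm : 0 < m)
    {F : EuclideanSpace ℝ (Fin 3) → ℂ} (hF : Integrable F) : Integrable fun k => ↑(omegaKG m k)⁻¹ * F k := by
  have hω (k : EuclideanSpace ℝ (Fin 3)) : m ≤ omegaKG m k :=
    (le_abs_self m).trans (abs_le_omegaKG m k)
  refine hF.bdd_mul (c := m⁻¹) (measurable_omegaKG m).inv.complex_ofReal.aestronglyMeasurable
    (ae_of_all _ fun k => ?_)
  rw [norm_real, norm_inv, Real.norm_of_nonneg (hm.le.trans (hω k))]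
  exact inv_anti₀ hm (hω k)

/-- Riemann–Lebesgue-type decay for Klein–Gordon oscillations: for `m > 0` and `g ∈ L¹(ℝ³,ℂ)`,
for each fixed `z ∈ ℝ³` the integrals `∫ e^{−ik·z} cos(2ω(k)t) g(k) dk` and
`∫ e^{−ik·z} (sin(2ω(k)t)/ω(k)) g(k) dk` tend to `0` as `t → ∞`. -/
theorem kleinGordon_riemann_lebesgue (m : ℝ) (hm : 0 < m)
    (g : EuclideanSpace ℝ (Fin 3) → ℂ) (hg : MeasureTheory.Integrable g)
    (z : EuclideanSpace ℝ (Fin 3)) :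
    Tendsto (fun t : ℝ => ∫ k : EuclideanSpace ℝ (Fin 3),
        Complex.exp (-(I * (⟪k, z⟫ : ℝ))) * (Real.cos (2 * omegaKG m k * t) : ℂ) * g k)
      atTop (nhds 0) ∧
    Tendsto (fun t : ℝ => ∫ k : EuclideanSpace ℝ (Fin 3),
        Complex.exp (-(I * (⟪k, z⟫ : ℝ))) *
          ((Real.sin (2 * omegaKG m k * t) / omegaKG m k : ℝ) : ℂ) * g k)
      atTop (nhds 0) := by
  have hRL {F : EuclideanSpace ℝ (Fin 3) → ℂ} (hF : Integrable F) :
      Tendsto (fun t : ℝ => ∫ k, exp (↑(t * omegaKG m k) * I) * F k) (cocompact ℝ) (𝓝 0) :=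
    tendsto_integral_exp_sqrt_norm_sq_add_mul_I (n := 2) (sq_nonneg m) hF
  have hdouble : Tendsto (fun t : ℝ => 2 * t) atTop (cocompact ℝ) :=
    (tendsto_id.const_mul_atTop two_pos).mono_right atTop_le_cocompact
  have hf : Integrable fun k => exp (-(I * ⟪k, z⟫)) * g k := by
    simpa only [ofReal_neg, neg_mul, mul_comm I] using
      hg.exp_ofReal_mul_I_mul (ψ := fun k => -⟪k, z⟫) (by fun_prop)
  have hf' := hf.omegaKG_inv_mul hm
  constructor
  · refine ((tendsto_integral_cos_mul_of_tendsto_integral_exp (measurable_omegaKG m) hf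
      (hRL hf)).comp hdouble).congr fun t => integral_congr_ae (ae_of_all _ fun k => ?_)
    rw [mul_right_comm (2 : ℝ) t]
    push_cast
    ring
  · refine ((tendsto_integral_sin_mul_of_tendsto_integral_exp (measurable_omegaKG m) hf'
      (hRL hf')).comp hdouble).congr fun t => integral_congr_ae (ae_of_all _ fun k => ?_)
    rw [mul_right_comm (2 : ℝ) t]
    push_cast
    ring
end

section
/- For every m > 0 and every k ∈ ℝ³, the complex 8×8 matrix P(−ik) := −i(Λ₁k₁ + Λ₂k₂ + Λ₃k₃) + mΛ₀ satisfies P(−ik) · P(−ik)* = (|k|² + m²) I₈, where P(−ik)* is the conjugate transpose. -/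
open Matrix Complex

set_option maxHeartbeats 1000000

/-- The standard 4×4 Dirac matrices `α₁, α₂, α₃`. -/
noncomputable def diracAlpha : Fin 3 → Matrix (Fin 4) (Fin 4) ℂ
  | 0 => !![0, 0, 0, 1;
            0, 0, 1, 0;
            0, 1, 0, 0;
            1, 0, 0, 0]
  | 1 => !![0, 0, 0, -I;
            0, 0, I, 0;
            0, -I, 0, 0;
            I, 0, 0, 0]
  | 2 => !![0, 0, 1, 0;
            0, 0, 0, -1;
            1, 0, 0, 0;
            0, -1, 0, 0]

/-- The standard Dirac matrix `β`. -/
noncomputable def diracBeta : Matrix (Fin 4) (Fin 4) ℂ :=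
  !![1, 0, 0, 0;
     0, 1, 0, 0;
     0, 0, -1, 0;
     0, 0, 0, -1]

/-- The 8×8 matrices `Λ₁ = [[α₁,0],[0,α₁]]`, `Λ₂ = [[0,iα₂],[−iα₂,0]]`, `Λ₃ = [[α₃,0],[0,α₃]]`
(in 4×4 blocks; `Λ₀` is defined separately). All three have real entries. -/
noncomputable def lambdaMat : Fin 3 → Matrix (Fin 4 ⊕ Fin 4) (Fin 4 ⊕ Fin 4) ℂ
  | 0 => Matrix.fromBlocks (diracAlpha 0) 0 0 (diracAlpha 0)
  | 1 => Matrix.fromBlocks 0 (I • diracAlpha 1) (-(I • diracAlpha 1)) 0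
  | 2 => Matrix.fromBlocks (diracAlpha 2) 0 0 (diracAlpha 2)

/-- The 8×8 matrix `Λ₀ = [[0,−β],[β,0]]` (in 4×4 blocks). -/
noncomputable def lambdaMat0 : Matrix (Fin 4 ⊕ Fin 4) (Fin 4 ⊕ Fin 4) ℂ :=
  Matrix.fromBlocks 0 (-diracBeta) diracBeta 0

/-- The symbol `P(−ik) = −i(Λ₁k₁ + Λ₂k₂ + Λ₃k₃) + mΛ₀`. -/
noncomputable def symbolP (m : ℝ) (k : EuclideanSpace ℝ (Fin 3)) :
    Matrix (Fin 4 ⊕ Fin 4) (Fin 4 ⊕ Fin 4) ℂ :=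
  (-I) • (∑ j : Fin 3, (k j : ℂ) • lambdaMat j) + (m : ℂ) • lambdaMat0


/-- The diagonal 4×4 block of `symbolP`. -/
noncomputable def blockA (a c : ℝ) : Matrix (Fin 4) (Fin 4) ℂ :=
  !![0, 0, -I * c, -I * a;
     0, 0, -I * a, I * c;
     -I * c, -I * a, 0, 0;
     -I * a, I * c, 0, 0]

/-- The off-diagonal 4×4 block of `symbolP`. -/
noncomputable def blockB (b m : ℝ) : Matrix (Fin 4) (Fin 4) ℂ :=
  !![-m, 0, 0, -I * b;
     0, -m, I * b, 0;
     0, -I * b, m, 0;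
     I * b, 0, 0, m]

lemma symbolP_eq (m : ℝ) (k : EuclideanSpace ℝ (Fin 3)) :
    symbolP m k = Matrix.fromBlocks (blockA (k 0) (k 2)) (blockB (k 1) m)
      (-(blockB (k 1) m)) (blockA (k 0) (k 2)) := by
  ext i j
  rcases i with i | i <;> rcases j with j | j <;> fin_cases i <;> fin_cases j <;>
    · simp [symbolP, lambdaMat, lambdaMat0, diracAlpha, diracBeta, blockA, blockB,
        Fin.sum_univ_three, Matrix.vecHead, Matrix.vecTail, -mul_eq_zero]
      try ring

lemma blockA_conjTranspose (a c : ℝ) : (blockA a c)ᴴ = -blockA a c := by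
  ext i j
  fin_cases i <;> fin_cases j <;>
    simp [blockA, Matrix.conjTranspose_apply, Matrix.vecHead, Matrix.vecTail]

lemma blockB_conjTranspose (b m : ℝ) : (blockB b m)ᴴ = blockB b m := by
  ext i j
  fin_cases i <;> fin_cases j <;>
    simp [blockB, Matrix.conjTranspose_apply, Matrix.vecHead, Matrix.vecTail]

lemma blockA_mul_add (a b c m : ℝ) :
    blockA a c * (blockA a c)ᴴ + blockB b m * (blockB b m)ᴴ =
      ((a ^ 2 + b ^ 2 + c ^ 2 + m ^ 2 : ℝ) : ℂ) • 1 := by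
  rw [blockA_conjTranspose, blockB_conjTranspose]
  ext i j
  fin_cases i <;> fin_cases j <;>
    · simp [blockA, blockB, mul_apply, Fin.sum_univ_four, Matrix.one_apply, Matrix.vecHead,
        Matrix.vecTail, -mul_eq_zero]
      try ring_nf
      try simp [Complex.I_sq]
      try ring_nf
      try norm_num

lemma blockB_mul_comm (a b c m : ℝ) :
    blockB b m * (blockA a c)ᴴ = blockA a c * (blockB b m)ᴴ := by
  rw [blockA_conjTranspose, blockB_conjTranspose]
  ext i j
  fin_cases i <;> fin_cases j <;>
    · simp [blockA, blockB, mul_apply, Fin.sum_univ_four, Matrix.vecHead, Matrix.vecTail,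
        -mul_eq_zero]
      try ring_nf
      try simp [Complex.I_sq]
      try ring_nf

/-- For every `m > 0` and `k ∈ ℝ³`, `P(−ik) · P(−ik)* = (|k|² + m²) I₈`, where `*` is the
conjugate transpose. -/
theorem symbolP_mul_conjTranspose (m : ℝ) (hm : 0 < m) (k : EuclideanSpace ℝ (Fin 3)) :
    symbolP m k * (symbolP m k)ᴴ =
      ((‖k‖ ^ 2 + m ^ 2 : ℝ) : ℂ) • (1 : Matrix (Fin 4 ⊕ Fin 4) (Fin 4 ⊕ Fin 4) ℂ) := by
  have hnorm : (‖k‖ ^ 2 + m ^ 2 : ℝ) = (k 0) ^ 2 + (k 1) ^ 2 + (k 2) ^ 2 + m ^ 2 := by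
    rw [EuclideanSpace.norm_eq, Real.sq_sqrt (by positivity)]
    simp [Fin.sum_univ_three, sq]
  rw [hnorm, symbolP_eq, Matrix.fromBlocks_conjTranspose, Matrix.fromBlocks_multiply,
    ← Matrix.fromBlocks_one, Matrix.fromBlocks_smul, smul_zero]
  refine Matrix.fromBlocks_inj.mpr ⟨?_, ?_, ?_, ?_⟩
  · exact blockA_mul_add (k 0) (k 1) (k 2) m
  · rw [Matrix.conjTranspose_neg, Matrix.mul_neg, blockB_mul_comm (k 0) (k 1) (k 2) m]
    exact neg_add_cancel _
  · rw [Matrix.neg_mul, blockB_mul_comm (k 0) (k 1) (k 2) m]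
    exact neg_add_cancel _
  · rw [Matrix.conjTranspose_neg, Matrix.neg_mul, Matrix.mul_neg, neg_neg, add_comm]
    exact blockA_mul_add (k 0) (k 1) (k 2) m
end

section
/- Key estimate for the room variables: let f : ℝ³ → M₈(ℝ) be measurable with ∫_{ℝ³} ‖f(z)‖ dz < ∞, let r̄ > 0, A > 0, t ≥ 1, and let g : ℝ³ → ℝ⁸ be measurable with |g(x)| ≤ A t^{−3/2} for all x and g(x) = 0 whenever |x| > t + r̄. Then for every a ∈ ℝ and every d > 0, |∫∫_{ℝ³×ℝ³} 1_{[a,a+d]}(x₃) ⟨f(x−y) g(y), g(x)⟩ dx dy| ≤ π A² d (t + r̄)² t^{−3} ∫_{ℝ³} ‖f(z)‖ dz; in particular this quantity is bounded by a constant (depending only on A, r̄ and ∫‖f‖) times d/t. -/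
open MeasureTheory Matrix
open scoped RealInnerProductSpace

/-! The integrand vanishes unless `x` lies in the slab `a ≤ x₃ ≤ a + d` and in the ball of radius
`t + rbar`, a set of volume at most `π d (t + rbar)²`. For such `x`, bounding `|g|` by
`A t^{-3/2}` and using translation invariance of Lebesgue measure, the `y`-integral is at most
`A² t⁻³ ∫‖f‖`. -/

theorem EuclideanSpace.norm_toLp_removeNth_le {n : ℕ} (i : Fin (n + 1))
    (x : EuclideanSpace ℝ (Fin (n + 1))) : ‖WithLp.toLp 2 (i.removeNth x.ofLp)‖ ≤ ‖x‖ := by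
  simp only [EuclideanSpace.norm_eq, Fin.removeNth]
  gcongr
  rw [Fin.sum_univ_succAbove _ i]
  exact le_add_of_nonneg_left (by positivity)

open Metric in
theorem EuclideanSpace.volume_setOf_apply_mem_and_norm_le {n : ℕ} (i : Fin (n + 1))
    (s : Set ℝ) (R : ℝ) :
    volume {x : EuclideanSpace ℝ (Fin (n + 1)) | x i ∈ s ∧ ‖x‖ ≤ R} ≤
      volume s * volume (closedBall (0 : EuclideanSpace ℝ (Fin n)) R) := by
  let e := (MeasurableEquiv.toLp 2 (Fin (n + 1) → ℝ)).symm.trans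
    (MeasurableEquiv.piFinSuccAbove (fun _ => ℝ) i)
  have he : MeasurePreserving e volume (volume.prod volume) :=
    (volume_preserving_piFinSuccAbove (fun _ => ℝ) i).comp
      (volume_preserving_symm_measurableEquiv_toLp _)
  have hball : volume (WithLp.toLp 2 ⁻¹' closedBall (0 : EuclideanSpace ℝ (Fin n)) R) =
      volume (closedBall (0 : EuclideanSpace ℝ (Fin n)) R) :=
    (volume_preserving_symm_measurableEquiv_toLp (Fin n)).symm.measure_preimage_equiv _
  calc _ ≤ volume (e ⁻¹' (s ×ˢ (WithLp.toLp 2 ⁻¹' closedBall 0 R))) := by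
        refine measure_mono fun x ⟨hxs, hxR⟩ => ⟨hxs, ?_⟩
        simpa [e] using (norm_toLp_removeNth_le i x).trans hxR
    _ = _ := by rw [he.measure_preimage_equiv, Measure.prod_prod, hball]

theorem EuclideanSpace.volume_setOf_apply_mem_Icc_and_norm_le_fin_three (i : Fin 3) (a b : ℝ)
    {R : ℝ} (hR : 0 ≤ R) :
    volume {x : EuclideanSpace ℝ (Fin 3) | x i ∈ Set.Icc a b ∧ ‖x‖ ≤ R} ≤
      ENNReal.ofReal ((b - a) * (R ^ 2 * Real.pi)) := by
  have h := volume_setOf_apply_mem_and_norm_le (n := 2) i (Set.Icc a b) R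
  rwa [Real.volume_Icc, volume_closedBall_fin_two, ← ENNReal.ofReal_pow hR,
    ← ENNReal.ofReal_mul (by positivity), ← ENNReal.ofReal_mul' (by positivity)] at h

theorem norm_integral_le_of_forall_notMem_eq_zero {X E : Type*} [MeasurableSpace X]
    [NormedAddCommGroup E] [NormedSpace ℝ E] {μ : Measure X} {φ : X → E} {s : Set X} {C V : ℝ}
    (hC : 0 ≤ C) (hV : 0 ≤ V) (hs : μ s ≤ ENNReal.ofReal V) (h0 : ∀ x ∉ s, φ x = 0)
    (hφ : ∀ x ∈ s, ‖φ x‖ ≤ C) : ‖∫ x, φ x ∂μ‖ ≤ C * V := by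
  rw [← setIntegral_eq_integral_of_forall_compl_eq_zero h0]
  calc _ ≤ C * μ.real s :=
        norm_setIntegral_le_of_norm_le_const (hs.trans_lt ENNReal.ofReal_lt_top) hφ
    _ ≤ C * V := by gcongr; exact ENNReal.toReal_le_of_le_ofReal hV hs

theorem norm_integral_inner_apply_sub_le {V E : Type*} [AddGroup V] [MeasurableSpace V]
    [MeasurableAdd V] [MeasurableNeg V] {μ : Measure V} [μ.IsAddLeftInvariant] [μ.IsNegInvariant]
    [NormedAddCommGroup E] [InnerProductSpace ℝ E] {F : V → E →L[ℝ] E}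
    (hF : Integrable (fun z => ‖F z‖) μ) {g : V → E} {c : ℝ} (hg : ∀ y, ‖g y‖ ≤ c) (x : V)
    (v : E) : ‖∫ y, ⟪F (x - y) (g y), v⟫ ∂μ‖ ≤ c * ‖v‖ * ∫ z, ‖F z‖ ∂μ := by
  calc ‖∫ y, ⟪F (x - y) (g y), v⟫ ∂μ‖ ≤ ∫ y, c * ‖v‖ * ‖F (x - y)‖ ∂μ := by
        refine norm_integral_le_of_norm_le ((hF.comp_sub_left x).const_mul _)
          (.of_forall fun y => ?_)
        calc ‖⟪F (x - y) (g y), v⟫‖ ≤ ‖F (x - y)‖ * ‖g y‖ * ‖v‖ :=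
              (norm_inner_le_norm _ _).trans (by gcongr; exact (F (x - y)).le_opNorm _)
          _ ≤ ‖F (x - y)‖ * c * ‖v‖ := by gcongr; exact hg y
          _ = c * ‖v‖ * ‖F (x - y)‖ := by ring
    _ = c * ‖v‖ * ∫ z, ‖F z‖ ∂μ := by
        rw [integral_const_mul, integral_sub_left_eq_self (fun z => ‖F z‖) μ x]

theorem sq_mul_rpow_neg_three_halves (A : ℝ) {t : ℝ} (ht : 0 < t) :
    (A * t ^ (-(3 : ℝ) / 2)) ^ 2 = A ^ 2 / t ^ 3 := by
  rw [mul_pow, ← Real.rpow_mul_natCast ht.le, show -(3 : ℝ) / 2 * (2 : ℕ) = -(3 : ℕ) by norm_num,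
    Real.rpow_neg ht.le, Real.rpow_natCast, div_eq_mul_inv]

theorem add_sq_div_pow_three_le {r t : ℝ} (hr : 0 ≤ r) (ht : 1 ≤ t) :
    (t + r) ^ 2 / t ^ 3 ≤ (1 + r) ^ 2 / t := by
  have ht0 : 0 < t := by linarith
  rw [div_le_div_iff₀ (by positivity) ht0]
  have : t + r ≤ t * (1 + r) := by nlinarith
  calc (t + r) ^ 2 * t ≤ (t * (1 + r)) ^ 2 * t := by gcongr
    _ = (1 + r) ^ 2 * t ^ 3 := by ring

theorem room_variable_estimate_general
    (f : EuclideanSpace ℝ (Fin 3) → Matrix (Fin 8) (Fin 8) ℝ)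
    (hf_int : Integrable fun z => ‖Matrix.toEuclideanCLM (𝕜 := ℝ) (f z)‖)
    (rbar A t : ℝ) (hrbar : 0 < rbar) (ht : 1 ≤ t)
    (g : EuclideanSpace ℝ (Fin 3) → EuclideanSpace ℝ (Fin 8))
    (hg_bdd : ∀ x, ‖g x‖ ≤ A * t ^ (-(3 : ℝ) / 2))
    (hg_supp : ∀ x, t + rbar < ‖x‖ → g x = 0)
    (a d : ℝ) (hd : 0 < d) :
    |∫ x : EuclideanSpace ℝ (Fin 3), ∫ y : EuclideanSpace ℝ (Fin 3),
        Set.indicator (Set.Icc a (a + d)) (fun _ => (1 : ℝ)) (x 2) *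
          ⟪Matrix.toEuclideanCLM (𝕜 := ℝ) (f (x - y)) (g y), g x⟫| ≤
        Real.pi * A ^ 2 * d * (t + rbar) ^ 2 / t ^ 3 *
          ∫ z : EuclideanSpace ℝ (Fin 3), ‖Matrix.toEuclideanCLM (𝕜 := ℝ) (f z)‖ ∧
    |∫ x : EuclideanSpace ℝ (Fin 3), ∫ y : EuclideanSpace ℝ (Fin 3),
        Set.indicator (Set.Icc a (a + d)) (fun _ => (1 : ℝ)) (x 2) *
          ⟪Matrix.toEuclideanCLM (𝕜 := ℝ) (f (x - y)) (g y), g x⟫| ≤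
        (Real.pi * A ^ 2 * (1 + rbar) ^ 2 *
          ∫ z : EuclideanSpace ℝ (Fin 3), ‖Matrix.toEuclideanCLM (𝕜 := ℝ) (f z)‖) * (d / t) := by
  set c := A * t ^ (-(3 : ℝ) / 2)
  set I := ∫ z : EuclideanSpace ℝ (Fin 3), ‖Matrix.toEuclideanCLM (𝕜 := ℝ) (f z)‖
  set φ := fun x : EuclideanSpace ℝ (Fin 3) => ∫ y : EuclideanSpace ℝ (Fin 3),
    Set.indicator (Set.Icc a (a + d)) (fun _ => (1 : ℝ)) (x 2) *
      ⟪Matrix.toEuclideanCLM (𝕜 := ℝ) (f (x - y)) (g y), g x⟫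
  set S := {x : EuclideanSpace ℝ (Fin 3) | x 2 ∈ Set.Icc a (a + d) ∧ ‖x‖ ≤ t + rbar}
  have hI : 0 ≤ I := integral_nonneg fun z => norm_nonneg _
  have hvol : volume S ≤ ENNReal.ofReal (d * ((t + rbar) ^ 2 * Real.pi)) := by
    have h := EuclideanSpace.volume_setOf_apply_mem_Icc_and_norm_le_fin_three 2 a (a + d)
      (R := t + rbar) (by linarith)
    rwa [add_sub_cancel_left] at h
  have hout : ∀ x ∉ S, φ x = 0 := by
    intro x hx
    simp only [S, Set.mem_ofPred_eq, not_and_or, not_le] at hx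
    rcases hx with hx | hx
    · simp [φ, Set.indicator_of_notMem hx]
    · simp [φ, hg_supp x hx]
  have hin : ∀ x ∈ S, ‖φ x‖ ≤ c ^ 2 * I := by
    rintro x ⟨hx, -⟩
    have hc : 0 ≤ c := (norm_nonneg _).trans (hg_bdd x)
    simp only [φ, Set.indicator_of_mem hx, one_mul]
    calc _ ≤ c * ‖g x‖ * I := norm_integral_inner_apply_sub_le hf_int hg_bdd x (g x)
      _ ≤ c * c * I := by gcongr; exact hg_bdd x
      _ = c ^ 2 * I := by ring
  have hmain : |∫ x, φ x| ≤ Real.pi * A ^ 2 * d * (t + rbar) ^ 2 / t ^ 3 * I := by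
    rw [← Real.norm_eq_abs]
    calc _ ≤ c ^ 2 * I * (d * ((t + rbar) ^ 2 * Real.pi)) :=
          norm_integral_le_of_forall_notMem_eq_zero (by positivity) (by positivity) hvol hout hin
      _ = _ := by rw [sq_mul_rpow_neg_three_halves A (by linarith)]; ring
  refine ⟨hmain, hmain.trans ?_⟩
  calc Real.pi * A ^ 2 * d * (t + rbar) ^ 2 / t ^ 3 * I
      = Real.pi * A ^ 2 * d * I * ((t + rbar) ^ 2 / t ^ 3) := by ring
    _ ≤ Real.pi * A ^ 2 * d * I * ((1 + rbar) ^ 2 / t) :=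
        mul_le_mul_of_nonneg_left (add_sq_div_pow_three_le hrbar.le ht) (by positivity)
    _ = _ := by ring

/-- Key estimate for the room variables: if `∫‖f‖ < ∞` (operator norm), `t ≥ 1`,
`|g(x)| ≤ A t^{−3/2}` everywhere and `g(x) = 0` for `|x| > t + rbar`, then for every `a ∈ ℝ`,
`d > 0`,
`|∬ 1_{[a,a+d]}(x₃) ⟨f(x−y) g(y), g(x)⟩ dx dy| ≤ π A² d (t+rbar)² t⁻³ ∫‖f‖`;
in particular the quantity is at most `(π A² (1+rbar)² ∫‖f‖) · (d/t)`, a constant depending only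
on `A`, `rbar` and `∫‖f‖` times `d/t`. -/
theorem room_variable_estimate
    (f : EuclideanSpace ℝ (Fin 3) → Matrix (Fin 8) (Fin 8) ℝ)
    (hf_meas : ∀ i j, Measurable fun z => f z i j)
    (hf_int : Integrable fun z => ‖Matrix.toEuclideanCLM (𝕜 := ℝ) (f z)‖)
    (rbar A t : ℝ) (hrbar : 0 < rbar) (hA : 0 < A) (ht : 1 ≤ t)
    (g : EuclideanSpace ℝ (Fin 3) → EuclideanSpace ℝ (Fin 8)) (hg_meas : Measurable g)
    (hg_bdd : ∀ x, ‖g x‖ ≤ A * t ^ (-(3 : ℝ) / 2))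
    (hg_supp : ∀ x, t + rbar < ‖x‖ → g x = 0)
    (a d : ℝ) (hd : 0 < d) :
    |∫ x : EuclideanSpace ℝ (Fin 3), ∫ y : EuclideanSpace ℝ (Fin 3),
        Set.indicator (Set.Icc a (a + d)) (fun _ => (1 : ℝ)) (x 2) *
          ⟪Matrix.toEuclideanCLM (𝕜 := ℝ) (f (x - y)) (g y), g x⟫| ≤
        Real.pi * A ^ 2 * d * (t + rbar) ^ 2 / t ^ 3 *
          ∫ z : EuclideanSpace ℝ (Fin 3), ‖Matrix.toEuclideanCLM (𝕜 := ℝ) (f z)‖ ∧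
    |∫ x : EuclideanSpace ℝ (Fin 3), ∫ y : EuclideanSpace ℝ (Fin 3),
        Set.indicator (Set.Icc a (a + d)) (fun _ => (1 : ℝ)) (x 2) *
          ⟪Matrix.toEuclideanCLM (𝕜 := ℝ) (f (x - y)) (g y), g x⟫| ≤
        (Real.pi * A ^ 2 * (1 + rbar) ^ 2 *
          ∫ z : EuclideanSpace ℝ (Fin 3), ‖Matrix.toEuclideanCLM (𝕜 := ℝ) (f z)‖) * (d / t) :=
  room_variable_estimate_general f hf_int rbar A t hrbar ht g hg_bdd hg_supp a d hd
end
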